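/- arXiv:1507.06760 — 4 statements merged into one kernel-verified Lean document; each statement's English description precedes it below -/
import Mathlib

section
/- Let A be an ℝ-algebra that is finite dimensional as an ℝ-vector space. The bilinear form (f, g) ↦ tr(L_{fg}) on A (where L_a denotes left multiplication by a, and tr is the trace of the ℝ-linear endomorphism) is positive semidefinite if and only if every maximal ideal of A has residue field ℝ (equivalently, every ℝ-algebra homomorphism A → ℂ has image contained in ℝ). -/
/-!
After complexification, the eigenvalues of multiplication by `g` on `ℂ ⊗[ℝ] A` are exactly the
values `χ g` of the `ℝ`-algebra maps `χ : A → ℂ`, so `tr(L_{f * f})` is a sum, with multiplicities,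
of the numbers `χ(f)²`. If every `χ` is real-valued these are squares of reals. If some `φ` is not,
then `φ` is onto `ℂ`, and since `A` is artinian there is an `f` with `φ f = i` lying in every other
prime ideal; every `χ (f * f)` is then `-1` or `0`, with `-1` occurring, and the trace is negative.
-/

open TensorProduct Polynomial

section IsAlgClosed

variable {K B : Type*} [Field K] [IsAlgClosed K] [CommRing B] [Algebra K B] [Module.Finite K B]

theorem exists_algHom_apply_eq_zero_of_not_isUnit {x : B} (hx : ¬IsUnit x) :
    ∃ χ : B →ₐ[K] K, χ x = 0 := by
  obtain ⟨m, hm, hxm⟩ := exists_max_ideal_of_mem_nonunits hx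
  let := Ideal.Quotient.field m
  let e : K ≃ₐ[K] B ⧸ m :=
    AlgEquiv.ofBijective (Algebra.ofId K _) IsAlgClosed.algebraMap_bijective_of_isIntegral
  refine ⟨e.symm.toAlgHom.comp (Ideal.Quotient.mkₐ K m), ?_⟩
  simp [Ideal.Quotient.eq_zero_iff_mem.mpr hxm]

theorem mem_spectrum_iff_exists_algHom (x : B) (μ : K) :
    μ ∈ spectrum K x ↔ ∃ χ : B →ₐ[K] K, χ x = μ := by
  refine ⟨fun hμ ↦ ?_, fun ⟨χ, hχ⟩ ↦ hχ ▸ AlgHom.apply_mem_spectrum χ x⟩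
  obtain ⟨χ, hχ⟩ := exists_algHom_apply_eq_zero_of_not_isUnit (K := K) hμ
  rw [map_sub, AlgHom.commutes, Algebra.algebraMap_self, RingHom.id_apply, sub_eq_zero] at hχ
  exact ⟨χ, hχ.symm⟩

end IsAlgClosed

theorem spectrum_lmul {K B : Type*} [CommRing K] [CommRing B] [Algebra K B] (x : B) :
    spectrum K (Algebra.lmul K B x) = spectrum K x := by
  ext μ
  simp only [spectrum.mem_iff, ← (Algebra.lmul K B).commutes, ← map_sub, Algebra.lmul_isUnit_iff]

theorem exists_multiset_trace_mulLeft_eq_sum {k K A : Type*} [Field k] [Field K] [IsAlgClosed K]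
    [Algebra k K] [CommRing A] [Algebra k A] [Module.Finite k A] (g : A) :
    ∃ s : Multiset K, algebraMap k K (LinearMap.trace k A (LinearMap.mulLeft k g)) = s.sum ∧
      ∀ μ, μ ∈ s ↔ ∃ χ : A →ₐ[k] K, χ g = μ := by
  set T := Algebra.lmul K (K ⊗[k] A) (1 ⊗ₜ g)
  refine ⟨T.charpoly.roots, ?_, fun μ ↦ ?_⟩
  · rw [← LinearMap.trace_baseChange, ← Module.End.trace_eq_sum_roots_charpoly_of_splits
      (IsAlgClosed.splits _)]
    exact congrArg _ (Algebra.baseChange_lmul g)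
  · rw [mem_roots T.charpoly_monic.ne_zero, ← Module.End.mem_spectrum_iff_isRoot_charpoly,
      spectrum_lmul, mem_spectrum_iff_exists_algHom, (AlgHom.liftEquiv k K A K).exists_congr_left]
    simp

namespace IsArtinianRing

variable {R : Type*} [CommRing R] [IsArtinianRing R]

theorem exists_notMem_forall_mem_of_ne (p : Ideal R) [hp : p.IsPrime] :
    ∃ u ∉ p, ∀ q : Ideal R, q.IsPrime → q ≠ p → u ∈ q := by
  classical
  have hfin : {q : Ideal R | q.IsPrime ∧ q ≠ p}.Finite :=
    (setOfPred_isPrime_finite R).subset fun _ hq ↦ hq.1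
  have hinf : ¬hfin.toFinset.inf id ≤ p := by
    rw [hp.inf_le']
    rintro ⟨q, hq, hqp⟩
    obtain ⟨hq, hne⟩ := hfin.mem_toFinset.mp hq
    exact hne ((isMaximal_of_isPrime q).eq_of_le hp.ne_top hqp)
  obtain ⟨u, hu, hup⟩ := SetLike.not_le_iff_exists.mp hinf
  exact ⟨u, hup, fun q hq hne ↦ Finset.inf_le (f := id) (hfin.mem_toFinset.mpr ⟨hq, hne⟩) hu⟩

theorem exists_apply_eq_forall_mem_of_ne {L F : Type*} [Field L] [FunLike F R L]
    [RingHomClass F R L] (φ : F) (hφ : Function.Surjective φ) (z : L) :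
    ∃ f, φ f = z ∧ ∀ q : Ideal R, q.IsPrime → q ≠ RingHom.ker φ → f ∈ q := by
  have := RingHom.ker_isPrime φ
  obtain ⟨u, hu, hmem⟩ := exists_notMem_forall_mem_of_ne (RingHom.ker φ)
  obtain ⟨c, hc⟩ := hφ ((φ u)⁻¹ * z)
  refine ⟨u * c, ?_, fun q hq hne ↦ q.mul_mem_right c (hmem q hq hne)⟩
  rw [map_mul, hc, mul_inv_cancel_left₀ (by simpa using hu)]

end IsArtinianRing

theorem AlgHom.surjective_of_im_ne_zero {A : Type*} [Ring A] [Algebra ℝ A] (φ : A →ₐ[ℝ] ℂ)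
    {a : A} (ha : (φ a).im ≠ 0) : Function.Surjective φ := by
  intro w
  refine ⟨algebraMap ℝ A (w.re - w.im / (φ a).im * (φ a).re) + (w.im / (φ a).im) • a, ?_⟩
  apply Complex.ext
  · simp
  · simp
    field_simp

theorem exists_mul_self_eq_neg_one {A : Type*} [CommRing A] [Algebra ℝ A] [IsArtinianRing A]
    (φ : A →ₐ[ℝ] ℂ) {a : A} (ha : (φ a).im ≠ 0) :
    ∃ f, φ (f * f) = -1 ∧ ∀ χ : A →ₐ[ℝ] ℂ, χ (f * f) = -1 ∨ χ (f * f) = 0 := by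
  obtain ⟨f, hf, hmem⟩ :=
    IsArtinianRing.exists_apply_eq_forall_mem_of_ne φ (φ.surjective_of_im_ne_zero ha) Complex.I
  have hφf : φ (f * f) = -1 := by rw [map_mul, hf, Complex.I_mul_I]
  refine ⟨f, hφf, fun χ ↦ ?_⟩
  by_cases hker : RingHom.ker χ = RingHom.ker φ
  · left
    have : f * f + 1 ∈ RingHom.ker χ := by
      rw [hker, RingHom.mem_ker, map_add, hφf, map_one, neg_add_cancel]
    rwa [RingHom.mem_ker, map_add, map_one, add_eq_zero_iff_eq_neg] at this
  · right
    rw [map_mul, RingHom.mem_ker.mp (hmem _ (RingHom.ker_isPrime χ) hker), zero_mul]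

section TraceForm

open ComplexOrder

variable {A : Type*} [CommRing A] [Algebra ℝ A] [FiniteDimensional ℝ A]

theorem trace_mulLeft_mul_self_nonneg (hreal : ∀ (φ : A →ₐ[ℝ] ℂ) (a : A), (φ a).im = 0)
    (f : A) : 0 ≤ LinearMap.trace ℝ A (LinearMap.mulLeft ℝ (f * f)) := by
  obtain ⟨s, hs, hmem⟩ := exists_multiset_trace_mulLeft_eq_sum (k := ℝ) (K := ℂ) (f * f)
  have hsum : (0 : ℂ) ≤ s.sum := Multiset.sum_nonneg fun μ hμ ↦ by
    obtain ⟨χ, rfl⟩ := (hmem μ).mp hμ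
    rw [map_mul, ← Complex.re_add_im (χ f), hreal χ f, Complex.ofReal_zero, zero_mul, add_zero,
      ← Complex.ofReal_mul]
    exact Complex.zero_le_real.mpr (mul_self_nonneg _)
  rw [← hs] at hsum
  exact Complex.zero_le_real.mp hsum

theorem exists_trace_mulLeft_mul_self_neg (φ : A →ₐ[ℝ] ℂ) {a : A} (ha : (φ a).im ≠ 0) :
    ∃ f : A, LinearMap.trace ℝ A (LinearMap.mulLeft ℝ (f * f)) < 0 := by
  have := IsArtinianRing.of_finite ℝ A
  obtain ⟨f, hφf, hχf⟩ := exists_mul_self_eq_neg_one φ ha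
  obtain ⟨s, hs, hmem⟩ := exists_multiset_trace_mulLeft_eq_sum (k := ℝ) (K := ℂ) (f * f)
  obtain ⟨t, rfl⟩ := Multiset.exists_cons_of_mem ((hmem (-1)).mpr ⟨φ, hφf⟩)
  have ht : t.sum ≤ 0 := by
    refine (Multiset.sum_le_card_nsmul t 0 fun μ hμ ↦ ?_).trans_eq (nsmul_zero _)
    obtain ⟨χ, rfl⟩ := (hmem μ).mp (Multiset.mem_cons_of_mem hμ)
    rcases hχf χ with h | h <;> norm_num [h]
  refine ⟨f, Complex.real_lt_real.mp ?_⟩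
  rw [Complex.ofReal_zero, ← Complex.coe_algebraMap, hs, Multiset.sum_cons]
  calc -1 + t.sum ≤ -1 := add_le_of_nonpos_right ht
    _ < 0 := by norm_num

end TraceForm

/-- For a finite-dimensional commutative `ℝ`-algebra `A`, the trace bilinear form
`(f, g) ↦ tr(x ↦ f*g*x)` is positive semidefinite if and only if every
`ℝ`-algebra homomorphism `A → ℂ` has real image (i.e. all residue fields are `ℝ`). -/
theorem stmt_3 (A : Type*) [CommRing A] [Algebra ℝ A] [FiniteDimensional ℝ A] :
    (∀ f : A, 0 ≤ LinearMap.trace ℝ A (LinearMap.mulLeft ℝ (f * f))) ↔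
      (∀ φ : A →ₐ[ℝ] ℂ, ∀ a : A, (φ a).im = 0) := by
  refine ⟨fun hpsd φ a ↦ ?_, trace_mulLeft_mul_self_nonneg⟩
  by_contra ha
  obtain ⟨f, hf⟩ := exists_trace_mulLeft_mul_self_neg φ ha
  exact (hpsd f).not_gt hf
end

section
/- Let f : X → Y be a holomorphic map between Riemann surfaces, p a point with f(p) real in the following sense: X and Y carry antiholomorphic involutions τ, σ with f∘τ = σ∘f and p, f(p) are fixed points. If f maps only fixed points to fixed points (real fibered) near p, then the derivative of f at p is nonzero. Concretely: if f is a nonconstant holomorphic function on a neighborhood of 0 in ℂ with real Taylor coefficients such that f(z) ∈ ℝ implies z ∈ ℝ for z near 0, and f(0) = 0, then f'(0) ≠ 0. -/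
/-!
If `f 0` is real and `f'(0) = 0`, then near `0` either `f` is constant or `f z = f 0 + zⁿ g z`
with `n ≥ 2` and `g 0 ≠ 0`. Then `Im f (R e^{iθ}) = Rⁿ Im (e^{inθ} g (R e^{iθ}))`, and along an arc
of angular length `π / n` inside `(0, π)` the factor `e^{inθ}` turns by half a circle, so for small
`R` this changes sign. By the intermediate value theorem, `f` takes real values at non-real points
arbitrarily close to `0`.
-/

open Complex Filter Set Topology
open scoped Real

def IsRealFiberedAt (f : ℂ → ℂ) (z₀ : ℂ) : Prop :=
  ∀ᶠ z in 𝓝 z₀, (f z).im = 0 → z.im = 0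

theorem zero_mem_uIcc_of_mul_nonpos {α : Type*} [Ring α] [LinearOrder α] [IsStrictOrderedRing α]
    {a b : α} (h : a * b ≤ 0) : (0 : α) ∈ uIcc a b := by
  rcases mul_nonpos_iff.mp h with ⟨ha, hb⟩ | ⟨ha, hb⟩
  · exact mem_uIcc_of_ge hb ha
  · exact mem_uIcc_of_le ha hb

theorem Complex.frequently_im_ne_zero : ∃ᶠ z in 𝓝 (0 : ℂ), z.im ≠ 0 := by
  intro h
  obtain ⟨ε, hε, hε_im⟩ := Metric.eventually_nhds_iff.mp h
  refine hε_im (y := (ε / 2 : ℝ) * I) (by simp [abs_of_pos hε]; linarith) ?_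
  show ((ε / 2 : ℝ) * I).im ≠ 0
  rw [im_ofReal_mul, I_im, mul_one]
  exact (half_pos hε).ne'

theorem Complex.exists_mem_Ioo_im_exp_mul_ne_zero {c : ℂ} (hc : c ≠ 0) :
    ∃ ψ ∈ Ioo 0 π, (exp (ψ * I) * c).im ≠ 0 := by
  simp only [mul_im, exp_ofReal_mul_I_re, exp_ofReal_mul_I_im]
  by_cases hre : c.re = 0
  · have him : c.im ≠ 0 := fun him ↦ hc (Complex.ext hre him)
    refine ⟨π / 3, ⟨by positivity, by linarith [Real.pi_pos]⟩, ?_⟩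
    simpa [Real.cos_pi_div_three, hre] using him
  · refine ⟨π / 2, ⟨by positivity, by linarith [Real.pi_pos]⟩, ?_⟩
    simpa using hre

theorem im_circleMap_zero (R θ : ℝ) : (circleMap 0 R θ).im = R * Real.sin θ := by
  rw [circleMap_zero, im_ofReal_mul, exp_ofReal_mul_I_im]

theorem im_circleMap_zero_pow_mul (n : ℕ) (R θ : ℝ) (w : ℂ) :
    (circleMap 0 R θ ^ n * w).im = R ^ n * (exp (↑(n * θ) * I) * w).im := by
  rw [circleMap_zero_pow, circleMap_zero, mul_assoc, im_ofReal_mul]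

theorem continuous_circleMap_zero_radius (θ : ℝ) : Continuous fun R ↦ circleMap 0 R θ := by
  simp only [circleMap_zero]; fun_prop

theorem eventually_im_circleMap_pow_mul_mul_neg {g : ℂ → ℂ} (hg : ContinuousAt g 0) {n : ℕ}
    {θ₀ θ₁ : ℝ} (h : (exp (↑(n * θ₀) * I) * g 0).im * (exp (↑(n * θ₁) * I) * g 0).im < 0) :
    ∀ᶠ R in 𝓝[>] 0, (circleMap 0 R θ₀ ^ n * g (circleMap 0 R θ₀)).im *
      (circleMap 0 R θ₁ ^ n * g (circleMap 0 R θ₁)).im < 0 := by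
  have hcont (θ : ℝ) : ContinuousAt (fun R ↦ (exp (↑(n * θ) * I) * g (circleMap 0 R θ)).im) 0 :=
    continuous_im.continuousAt.comp <| continuousAt_const.mul <|
      ContinuousAt.comp (by simpa using hg) (continuous_circleMap_zero_radius θ).continuousAt
  have hneg := ((hcont θ₀).mul (hcont θ₁)).eventually (gt_mem_nhds (by simpa using h))
  filter_upwards [nhdsWithin_le_nhds hneg, self_mem_nhdsWithin] with R hR (hR0 : 0 < R)
  rw [im_circleMap_zero_pow_mul, im_circleMap_zero_pow_mul, mul_mul_mul_comm]
  exact mul_neg_of_pos_of_neg (by positivity) hR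

theorem frequently_im_pow_mul_eq_zero_and_im_ne_zero {g : ℂ → ℂ}
    (hg : ∀ᶠ z in 𝓝 0, ContinuousAt g z) (hg0 : g 0 ≠ 0) {n : ℕ} (hn : 2 ≤ n) :
    ∃ᶠ z in 𝓝 (0 : ℂ), (z ^ n * g z).im = 0 ∧ z.im ≠ 0 := by
  obtain ⟨ψ, ⟨hψ0, hψπ⟩, hψ⟩ := exists_mem_Ioo_im_exp_mul_ne_zero hg0
  have hn2 : (2 : ℝ) ≤ n := by exact_mod_cast hn
  have hn0 : (0 : ℝ) < n := by linarith
  set θ₀ := ψ / n with hθ₀_def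
  set θ₁ := (ψ + π) / n with hθ₁_def
  have hθ₀ : 0 < θ₀ := by positivity
  have hθ₀₁ : θ₀ ≤ θ₁ := div_le_div_of_nonneg_right (by linarith [Real.pi_pos]) hn0.le
  have hθ₁ : θ₁ < π := by rw [hθ₁_def, div_lt_iff₀ hn0]; nlinarith
  have hsign : (exp (↑(n * θ₀) * I) * g 0).im * (exp (↑(n * θ₁) * I) * g 0).im < 0 := by
    rw [hθ₀_def, hθ₁_def, mul_div_cancel₀ _ hn0.ne', mul_div_cancel₀ _ hn0.ne', ofReal_add,
      add_mul, exp_add, exp_pi_mul_I, mul_neg_one, neg_mul, neg_im, mul_neg, neg_lt_zero]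
    exact mul_self_pos.mpr hψ
  obtain ⟨ρ, hρ, hgρ⟩ := Metric.eventually_nhds_iff.mp hg
  intro hnot
  obtain ⟨ε, hε, hεP⟩ := Metric.eventually_nhds_iff.mp hnot
  obtain ⟨R, hRneg, hR0, hRρε⟩ := ((eventually_im_circleMap_pow_mul_mul_neg hg.self_of_nhds
    hsign).and (Ioo_mem_nhdsGT (lt_min hρ hε))).exists
  have hdist (θ : ℝ) : dist (circleMap 0 R θ) 0 = R := by
    rw [dist_zero_right, norm_circleMap_zero, abs_of_pos hR0]
  have hcont : ContinuousOn (fun θ ↦ (circleMap 0 R θ ^ n * g (circleMap 0 R θ)).im)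
      (uIcc θ₀ θ₁) := fun θ _ ↦
    have hgθ : ContinuousAt g (circleMap 0 R θ) :=
      hgρ (by rw [hdist]; exact hRρε.trans_le (min_le_left _ _))
    (continuous_im.continuousAt.comp (((continuous_circleMap 0 R).continuousAt.pow n).mul
      (hgθ.comp (continuous_circleMap 0 R).continuousAt))).continuousWithinAt
  obtain ⟨θ, hθ, hθ_zero⟩ := intermediate_value_uIcc hcont (zero_mem_uIcc_of_mul_nonpos hRneg.le)
  rw [uIcc_of_le hθ₀₁] at hθ
  refine hεP (by rw [hdist]; exact hRρε.trans_le (min_le_right _ _)) ⟨hθ_zero, ?_⟩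
  rw [im_circleMap_zero]
  exact (mul_pos hR0 (Real.sin_pos_of_pos_of_lt_pi (hθ₀.trans_le hθ.1) (hθ.2.trans_lt hθ₁))).ne'

theorem AnalyticAt.not_isRealFiberedAt_zero {f : ℂ → ℂ} (hf : AnalyticAt ℂ f 0)
    (hord : 2 ≤ analyticOrderAt f 0) : ¬ IsRealFiberedAt f 0 := by
  simp only [IsRealFiberedAt, not_eventually, Classical.not_imp]
  cases h : analyticOrderAt f 0 with
  | top =>
    rw [analyticOrderAt_eq_top] at h
    exact frequently_im_ne_zero.and_eventually h |>.mono fun z ⟨hz, hfz⟩ ↦ ⟨by simp [hfz], hz⟩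
  | coe n =>
    obtain ⟨g, hg, hg0, hfg⟩ := hf.analyticOrderAt_eq_natCast.mp h
    rw [h, Nat.ofNat_le_cast] at hord
    refine (frequently_im_pow_mul_eq_zero_and_im_ne_zero
      (hg.eventually_analyticAt.mono fun _ hz ↦ hz.continuousAt) hg0 hord).and_eventually hfg
      |>.mono fun z ⟨hz, hfz⟩ ↦ ?_
    simpa [hfz] using hz

theorem IsRealFiberedAt.sub_const {f : ℂ → ℂ} {z₀ c : ℂ} (hf : IsRealFiberedAt f z₀)
    (hc : c.im = 0) : IsRealFiberedAt (f · - c) z₀ :=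
  hf.mono fun z hz hfz ↦ hz (by simpa [hc] using hfz)

theorem AnalyticAt.deriv_ne_zero_of_isRealFiberedAt {f : ℂ → ℂ} (hf : AnalyticAt ℂ f 0)
    (hf0 : (f 0).im = 0) (hfib : IsRealFiberedAt f 0) : deriv f 0 ≠ 0 := by
  intro hd
  have hord : 2 ≤ analyticOrderAt (f · - f 0) 0 := by
    rw [← hf.analyticOrderAt_deriv_add_one, ← one_add_one_eq_two]
    gcongr
    exact Order.one_le_iff_ne_zero.mpr (hf.deriv.analyticOrderAt_ne_zero.mpr hd)
  exact (hf.sub analyticAt_const).not_isRealFiberedAt_zero hord (hfib.sub_const hf0)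

theorem stmt_8_general (f : ℂ → ℂ) (r : ℝ) (hr : 0 < r)
    (hol : ∀ z ∈ Metric.ball (0 : ℂ) r, AnalyticAt ℂ f z)
    (h0 : f 0 = 0)
    (hfib : ∀ z ∈ Metric.ball (0 : ℂ) r, (f z).im = 0 → z.im = 0) :
    deriv f 0 ≠ 0 :=
  (hol 0 (Metric.mem_ball_self hr)).deriv_ne_zero_of_isRealFiberedAt (by simp [h0])
    (eventually_of_mem (Metric.ball_mem_nhds 0 hr) hfib)

/-- Let `f` be holomorphic on a disc around `0` in `ℂ` with `f 0 = 0`, all Taylor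
coefficients of `f` at `0` real, and suppose that near `0`, `f z ∈ ℝ` implies
`z ∈ ℝ` (real fiberedness). If `f` is nonconstant on the disc, then `f'(0) ≠ 0`. -/
theorem stmt_8 (f : ℂ → ℂ) (r : ℝ) (hr : 0 < r)
    (hol : ∀ z ∈ Metric.ball (0 : ℂ) r, AnalyticAt ℂ f z)
    (h0 : f 0 = 0)
    (hreal : ∀ n : ℕ, (iteratedDeriv n f 0).im = 0)
    (hfib : ∀ z ∈ Metric.ball (0 : ℂ) r, (f z).im = 0 → z.im = 0)
    (hnc : ∃ z ∈ Metric.ball (0 : ℂ) r, f z ≠ 0) :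
    deriv f 0 ≠ 0 :=
  stmt_8_general f r hr hol h0 hfib
end

section
/- A nonconstant polynomial f ∈ ℝ[z] with the property that for all z ∈ ℂ, f(z) ∈ ℝ implies z ∈ ℝ, has nonvanishing derivative at every real point: f'(x) ≠ 0 for all x ∈ ℝ. -/
/-!
If `f'(x) = 0` at a real point `x`, then `f(z) - f(x) = (z - x)^m q(z)` with `m ≥ 2` and
`q(x) ≠ 0` real. Since `m ≥ 2`, there are directions `u₁, u₂` in the upper half plane with
`u₁^m = i` and `u₂^m = -i`, so for small `ε > 0` we get `Im f(x + ε u₁) ≈ ε^m q(x)` and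
`Im f(x + ε u₂) ≈ -ε^m q(x)`, of opposite signs. The upper half plane is connected, so `Im f`
vanishes somewhere on it, i.e. `f` takes a real value at a non-real point.
-/

open Polynomial Complex Filter Topology
open scoped Real

theorem Polynomial.exists_sub_C_eval_eq_X_sub_C_pow_mul {R : Type*} [CommRing R] {f : R[X]}
    (hf : 0 < f.natDegree) {x : R} (hx : f.derivative.eval x = 0) :
    ∃ m, 2 ≤ m ∧ ∃ q : R[X], q.eval x ≠ 0 ∧ f - C (f.eval x) = (X - C x) ^ m * q := by
  set g := f - C (f.eval x)
  have hg : g ≠ 0 := ne_zero_of_natDegree_gt (n := 0) (by rwa [natDegree_sub_C])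
  have hm : 1 < g.rootMultiplicity x := by
    rw [one_lt_rootMultiplicity_iff_isRoot hg]
    simp [g, hx]
  exact ⟨_, hm, _, eval_divByMonic_pow_rootMultiplicity_ne_zero x hg,
    (pow_mul_divByMonic_rootMultiplicity_eq g x).symm⟩

theorem IsPreconnected.exists_eq_zero_of_mul_neg {X : Type*} [TopologicalSpace X] {s : Set X}
    (hs : IsPreconnected s) {v : X → ℝ} (hv : ContinuousOn v s) {a b : X} (ha : a ∈ s)
    (hb : b ∈ s) (hab : v a * v b < 0) : ∃ c ∈ s, v c = 0 := by
  rcases mul_neg_iff.1 hab with ⟨hva, hvb⟩ | ⟨hva, hvb⟩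
  · exact hs.intermediate_value hb ha hv ⟨hvb.le, hva.le⟩
  · exact hs.intermediate_value ha hb hv ⟨hva.le, hvb.le⟩

namespace Complex

theorem exists_im_pos_pow_eq_exp {m : ℕ} {θ : ℝ} (h₀ : 0 < θ) (hθ : θ < m * π) :
    ∃ u : ℂ, 0 < u.im ∧ u ^ m = exp (θ * I) := by
  have hm : (0 : ℝ) < m := pos_of_mul_pos_left (h₀.trans hθ) Real.pi_pos.le
  refine ⟨exp ((θ / m : ℝ) * I), ?_, ?_⟩
  · rw [exp_ofReal_mul_I_im]
    exact Real.sin_pos_of_pos_of_lt_pi (by positivity) ((div_lt_iff₀' hm).2 hθ)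
  · rw [← exp_nat_mul, ← mul_assoc, ← ofReal_natCast, ← ofReal_mul, mul_div_cancel₀ _ hm.ne']

theorem exists_im_pos_pow_eq_I_and_neg_I {m : ℕ} (hm : 2 ≤ m) :
    ∃ u₁ u₂ : ℂ, 0 < u₁.im ∧ 0 < u₂.im ∧ u₁ ^ m = I ∧ u₂ ^ m = -I := by
  have hm' : (2 : ℝ) ≤ m := by exact_mod_cast hm
  obtain ⟨u₁, hu₁, hu₁m⟩ := exists_im_pos_pow_eq_exp (m := m) (θ := π / 2) (by positivity)
    (by nlinarith [Real.pi_pos])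
  obtain ⟨u₂, hu₂, hu₂m⟩ := exists_im_pos_pow_eq_exp (m := m) (θ := π / 2 + π) (by positivity)
    (by nlinarith [Real.pi_pos])
  refine ⟨u₁, u₂, hu₁, hu₂, ?_, ?_⟩
  · rw [hu₁m, ofReal_div, ofReal_ofNat, exp_pi_div_two_mul_I]
  · rw [hu₂m, ofReal_add, add_mul, exp_add, ofReal_div, ofReal_ofNat, exp_pi_div_two_mul_I,
      exp_pi_mul_I, mul_neg_one]

end Complex

section LocalSign

variable {q : ℂ[X]} {u : ℂ} {m : ℕ}

theorem im_eval_X_sub_C_pow_mul (z₀ : ℂ) (ε : ℝ) :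
    (((X - C z₀) ^ m * q).eval (z₀ + ε * u)).im = ε ^ m * (u ^ m * q.eval (z₀ + ε * u)).im := by
  rw [eval_mul, eval_pow, eval_sub, eval_X, eval_C, add_sub_cancel_left, mul_pow, mul_assoc,
    ← ofReal_pow, im_ofReal_mul]

theorem exists_im_pos_mul_im_eval_pos {x : ℝ} (hu : 0 < u.im) (h : (u ^ m * q.eval ↑x).im ≠ 0) :
    ∃ z : ℂ, 0 < z.im ∧ 0 < (((X - C (x : ℂ)) ^ m * q).eval z).im * (u ^ m * q.eval ↑x).im := by
  set c := (u ^ m * q.eval ↑x).im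
  have hlim : Tendsto (fun ε : ℝ ↦ (u ^ m * q.eval (↑x + ε * u)).im * c) (𝓝[>] 0) (𝓝 (c * c)) := by
    refine Tendsto.mono_left ?_ nhdsWithin_le_nhds
    have : Continuous (fun ε : ℝ ↦ (u ^ m * q.eval (↑x + ε * u)).im * c) := by fun_prop
    exact this.tendsto' 0 _ (by simp [c])
  obtain ⟨ε, hε, hpos⟩ :=
    ((hlim.eventually (lt_mem_nhds (mul_self_pos.2 h))).and self_mem_nhdsWithin).exists
  refine ⟨x + ε * u, by simpa using mul_pos hpos hu, ?_⟩
  rw [im_eval_X_sub_C_pow_mul, mul_assoc]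
  exact mul_pos (pow_pos hpos m) hε

end LocalSign

/-- A nonconstant real polynomial `f` such that `f(z) ∈ ℝ` implies `z ∈ ℝ`
(for all complex `z`) has nonvanishing derivative at every real point. -/
theorem stmt_9 (f : Polynomial ℝ) (hf : 0 < f.natDegree)
    (hrf : ∀ z : ℂ, (Polynomial.eval z (f.map (algebraMap ℝ ℂ))).im = 0 → z.im = 0) :
    ∀ x : ℝ, Polynomial.eval x (Polynomial.derivative f) ≠ 0 := by
  intro x hx
  obtain ⟨m, hm, q, hq, hfq⟩ := exists_sub_C_eval_eq_X_sub_C_pow_mul hf hx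
  set g := (X - C (x : ℂ)) ^ m * q.map (algebraMap ℝ ℂ)
  have him : ∀ z : ℂ, (eval z (f.map (algebraMap ℝ ℂ))).im = (g.eval z).im := fun z ↦ by
    simpa [g, Polynomial.map_sub, Polynomial.map_mul] using
      congr_arg (fun p ↦ (eval z (p.map (algebraMap ℝ ℂ))).im) hfq
  have hqx : (q.map (algebraMap ℝ ℂ)).eval (x : ℂ) = q.eval x := by
    rw [eval_map_algebraMap]; exact aeval_algebraMap_apply_eq_algebraMap_eval x q
  obtain ⟨u₁, u₂, hu₁, hu₂, hu₁m, hu₂m⟩ := exists_im_pos_pow_eq_I_and_neg_I hm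
  have h₁ : (u₁ ^ m * (q.map (algebraMap ℝ ℂ)).eval (x : ℂ)).im = q.eval x := by simp [hu₁m, hqx]
  have h₂ : (u₂ ^ m * (q.map (algebraMap ℝ ℂ)).eval (x : ℂ)).im = -q.eval x := by
    simp [hu₂m, hqx]
  obtain ⟨z₁, hz₁, hv₁⟩ := exists_im_pos_mul_im_eval_pos hu₁ (h₁ ▸ hq)
  obtain ⟨z₂, hz₂, hv₂⟩ := exists_im_pos_mul_im_eval_pos hu₂ (h₂ ▸ neg_ne_zero.2 hq)
  rw [h₁] at hv₁
  rw [h₂] at hv₂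
  obtain ⟨z, hz, hz0⟩ := (convex_halfSpace_im_gt 0).isPreconnected.exists_eq_zero_of_mul_neg
    (by fun_prop : Continuous fun z ↦ (g.eval z).im).continuousOn hz₁ hz₂
    (by nlinarith [mul_self_pos.2 hq])
  exact hz.ne' (hrf z ((him z).trans hz0))
end

section
/- Let p(s,t) and q(s,t) be real homogeneous polynomials of the same degree with no common projective zero such that for all (λ:μ) ∈ ℙ¹(ℝ), all projective zeros of λp + μq are real. Then at every real projective zero x of p, the derivative of the rational function p/q (in an affine chart) is nonzero; equivalently, p and q have no common zero and all zeros of p are simple. -/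
/-!
Suppose `p` has a repeated complex factor `d`. A nonzero zero of `d` is a zero of `p`, hence a
real point `w` of `ℙ¹`, and `q(w) ≠ 0`. Restrict `p` and `q` to the real line `t ↦ w + t w^⊥`:
the restriction `P` of `p` vanishes to order `m ≥ 2` at `t = 0`, while `Q(0) ≠ 0`. The points of
this line with `Im t ≠ 0` are not real points of `ℙ¹`, so `λP + μQ` has no zero on the upper
half-plane, i.e. `Q` does not vanish there and `P/Q` takes no real value there. But
`P/Q = t^m h(t)` with `h(0)` real and nonzero, and since `m ≥ 2` there are points of the upper
half-plane near `0` where `t^m` is a positive, resp. negative, multiple of `i`; there `Im(P/Q)`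
has opposite signs, contradicting the intermediate value theorem on the connected half-plane.
-/

open MvPolynomial

/-- `z ∈ ℂ² ∖ {0}` represents a real point of `ℙ¹`. -/
def IsRealProjPoint2 (z : Fin 2 → ℂ) : Prop :=
  ∃ (w : Fin 2 → ℝ) (c : ℂ), c ≠ 0 ∧ z = c • fun i => (w i : ℂ)

open Filter Topology

theorem MvPolynomial.IsHomogeneous.aeval_smul {R S σ : Type*} [CommSemiring R] [CommSemiring S]
    [Algebra R S] {φ : MvPolynomial σ R} {n : ℕ} (hφ : φ.IsHomogeneous n) (c : S) (g : σ → S) :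
    MvPolynomial.aeval (c • g) φ = c ^ n * MvPolynomial.aeval g φ := by
  simp only [aeval_def, eval₂_eq, Finset.mul_sum]
  refine Finset.sum_congr rfl fun d hd => ?_
  have hdeg : ∑ i ∈ d.support, d i = n := by
    simp [← hφ (mem_support_iff.mp hd), Finsupp.weight_apply, Finsupp.sum]
  simp only [Pi.smul_apply, smul_eq_mul, mul_pow, Finset.prod_mul_distrib,
    Finset.prod_pow_eq_pow_sum, hdeg]
  ring

theorem MvPolynomial.exists_ne_zero_aeval_eq_zero_of_irreducible {K : Type*} [Field K]
    [IsAlgClosed K] {d : MvPolynomial (Fin 2) K} (hd : Irreducible d) :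
    ∃ z : Fin 2 → K, z ≠ 0 ∧ aeval z d = 0 := by
  -- Otherwise `X 0` vanishes on the zero locus of `d`, so `d ∣ X 0 ^ k`, `d ~ X 0` by primality,
  -- and `d` would vanish at `(0, 1)`.
  by_contra! h
  have hX : X 0 ∈ (Ideal.span {d}).radical := by
    rw [← vanishingIdeal_zeroLocus_eq_radical (K := K), mem_vanishingIdeal_iff]
    intro z hz
    have hz0 : z = 0 := by
      by_contra hz0
      exact h z hz0 (mem_zeroLocus_iff.mp hz d (Ideal.subset_span rfl))
    simp [hz0]
  obtain ⟨k, hk⟩ := Ideal.mem_radical_iff.mp hX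
  have hdX : d ∣ X 0 := hd.prime.dvd_of_dvd_pow (Ideal.mem_span_singleton.mp hk)
  obtain ⟨u, hu⟩ := (hd.associated_of_dvd X_prime.irreducible hdX).symm
  refine h ![0, 1] (by simp) ?_
  rw [← hu]
  simp

theorem MvPolynomial.exists_mul_self_dvd_aeval_eq_zero_of_not_squarefree {K : Type*} [Field K]
    [IsAlgClosed K] {A : MvPolynomial (Fin 2) K} (hA : ¬Squarefree A) :
    ∃ d : MvPolynomial (Fin 2) K, d * d ∣ A ∧ ∃ z : Fin 2 → K, z ≠ 0 ∧ aeval z d = 0 := by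
  rw [squarefree_iff_irreducible_sq_not_dvd_of_exists_irreducible ⟨X 0, X_prime.irreducible⟩]
    at hA
  push Not at hA
  obtain ⟨d, hd, hdA⟩ := hA
  exact ⟨d, hdA, exists_ne_zero_aeval_eq_zero_of_irreducible hd⟩

theorem MvPolynomial.eval_map_algebraMap {R S σ : Type*} [CommSemiring R] [CommSemiring S]
    [Algebra R S] (z : σ → S) (r : MvPolynomial σ R) :
    eval z (map (algebraMap R S) r) = aeval z r :=
  (eval_map _ _ _).trans (aeval_def _ _).symm

theorem MvPolynomial.polynomial_aeval_aeval {R S σ : Type*} [CommSemiring R] [CommSemiring S]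
    [Algebra R S] (x : S) (ℓ : σ → Polynomial R) (p : MvPolynomial σ R) :
    Polynomial.aeval x (aeval ℓ p) = aeval (fun i => Polynomial.aeval x (ℓ i)) p :=
  AlgHom.congr_fun (comp_aeval ℓ (Polynomial.aeval x)) p

theorem MvPolynomial.polynomial_map_aeval {K L σ : Type*} [Field K] [Field L] [Algebra K L]
    (ℓ : σ → Polynomial K) (p : MvPolynomial σ K) :
    (aeval ℓ p).map (algebraMap K L) =
      aeval (fun i => (ℓ i).map (algebraMap K L)) (map (algebraMap K L) p) := by
  rw [aeval_map_algebraMap, ← Polynomial.mapAlg_eq_map]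
  exact AlgHom.congr_fun (comp_aeval ℓ (Polynomial.mapAlg K L)) p

theorem MvPolynomial.X_sq_dvd_aeval_of_mul_self_dvd_map {K L σ : Type*} [Field K] [Field L]
    [Algebra K L] {p : MvPolynomial σ K} {n : ℕ} (hp : p.IsHomogeneous n)
    {d : MvPolynomial σ L} (hdp : d * d ∣ map (algebraMap K L) p) {ℓ : σ → Polynomial K} {c : L}
    (hc : c ≠ 0) (hd : aeval (c • fun i => algebraMap K L ((ℓ i).eval 0)) d = 0) :
    Polynomial.X ^ 2 ∣ aeval ℓ p := by
  set ℓL : σ → Polynomial L := fun i => (ℓ i).map (algebraMap K L)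
  have hX : Polynomial.X ∣ aeval (Polynomial.C c • ℓL) d := by
    rw [Polynomial.X_dvd_iff, Polynomial.coeff_zero_eq_aeval_zero, polynomial_aeval_aeval]
    convert hd using 2
    ext i
    simp [ℓL, ← Polynomial.coeff_zero_eq_aeval_zero', Polynomial.coeff_zero_eq_eval_zero]
  obtain ⟨e, he⟩ := hdp
  have hX2 : Polynomial.X ^ 2 ∣ Polynomial.C c ^ n * aeval ℓL (map (algebraMap K L) p) := by
    rw [← (hp.map _).aeval_smul, he, map_mul, map_mul, pow_two]
    exact (mul_dvd_mul hX hX).mul_right _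
  rw [← Polynomial.map_dvd_map (algebraMap K L) (algebraMap K L).injective
    (Polynomial.monic_X_pow 2), Polynomial.map_pow, Polynomial.map_X, polynomial_map_aeval]
  exact ((Polynomial.isUnit_C.mpr hc.isUnit).pow n).dvd_mul_left.mp hX2

section

open Complex

theorem exists_im_pos_pow_eq_I_mul {m : ℕ} (hm : 2 ≤ m) {δ : ℝ} (hδ : 0 < δ) :
    ∃ u₁ u₂ : ℂ, 0 < u₁.im ∧ 0 < u₂.im ∧ ‖u₁‖ = δ ∧ ‖u₂‖ = δ ∧
      u₁ ^ m = ((δ ^ m : ℝ) : ℂ) * I ∧ u₂ ^ m = -(((δ ^ m : ℝ) : ℂ) * I) := by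
  have hm' : (2 : ℝ) ≤ m := by exact_mod_cast hm
  have polar : ∀ θ : ℝ, 0 < θ → θ < Real.pi →
      0 < (δ * exp (θ * I)).im ∧ ‖(δ : ℂ) * exp (θ * I)‖ = δ ∧
        ((δ : ℂ) * exp (θ * I)) ^ m = δ ^ m * exp ((m * θ : ℝ) * I) := by
    intro θ h0 hπ
    refine ⟨?_, ?_, ?_⟩
    · simpa [exp_ofReal_mul_I_im] using mul_pos hδ (Real.sin_pos_of_pos_of_lt_pi h0 hπ)
    · simp [norm_exp_ofReal_mul_I, hδ.le]
    · rw [mul_pow, ← exp_nat_mul]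
      push_cast
      ring_nf
  obtain ⟨h₁, n₁, p₁⟩ := polar (Real.pi / (2 * m)) (by positivity)
    (by rw [div_lt_iff₀ (by positivity)]; nlinarith [Real.pi_pos])
  obtain ⟨h₂, n₂, p₂⟩ := polar (3 * Real.pi / (2 * m)) (by positivity)
    (by rw [div_lt_iff₀ (by positivity)]; nlinarith [Real.pi_pos])
  refine ⟨_, _, h₁, h₂, n₁, n₂, ?_, ?_⟩
  · rw [p₁, show (m : ℝ) * (Real.pi / (2 * m)) = Real.pi / 2 by field_simp]
    simp [exp_mul_I]
  · rw [p₂, show (m : ℝ) * (3 * Real.pi / (2 * m)) = Real.pi / 2 + Real.pi by field_simp; ring]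
    simp [add_mul, exp_add, exp_mul_I]

theorem exists_im_pos_im_pow_mul_eq_zero {h : ℂ → ℂ} {m : ℕ} (hm : 2 ≤ m) {γ : ℝ} (hγ : γ ≠ 0)
    (hγh : h 0 = γ) (h0 : ContinuousAt h 0) (hH : ContinuousOn h {u | 0 < u.im}) :
    ∃ u : ℂ, 0 < u.im ∧ (u ^ m * h u).im = 0 := by
  have hnear : ∀ᶠ u in 𝓝 0, 0 < γ * (h u).re := by
    refine (continuous_const.mul continuous_re).continuousAt.comp h0 |>.eventually
      (lt_mem_nhds ?_)
    simpa [hγh] using mul_self_pos.mpr hγ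
  obtain ⟨ε, hε, hball⟩ := Metric.eventually_nhds_iff_ball.mp hnear
  obtain ⟨u₁, u₂, hu₁, hu₂, n₁, n₂, p₁, p₂⟩ := exists_im_pos_pow_eq_I_mul hm (half_pos hε)
  have hpos : ∀ u : ℂ, ‖u‖ = ε / 2 → 0 < γ * (h u).re := fun u hu =>
    hball u (by rw [Metric.mem_ball, dist_zero_right, hu]; linarith)
  set g : ℂ → ℝ := fun u => γ * (u ^ m * h u).im
  have hg₁ : 0 < g u₁ := by
    have : g u₁ = (ε / 2) ^ m * (γ * (h u₁).re) := by
      simp only [g, p₁, mul_assoc, im_ofReal_mul, I_mul_im]; ring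
    rw [this]; exact mul_pos (by positivity) (hpos u₁ n₁)
  have hg₂ : g u₂ < 0 := by
    have : g u₂ = -((ε / 2) ^ m * (γ * (h u₂).re)) := by
      simp only [g, p₂, neg_mul, mul_assoc, neg_im, im_ofReal_mul, I_mul_im]; ring
    rw [this]; exact neg_neg_of_pos (mul_pos (by positivity) (hpos u₂ n₂))
  have hgcont : ContinuousOn g {u | 0 < u.im} :=
    continuousOn_const.mul (continuous_im.comp_continuousOn
      ((continuous_pow m).continuousOn.mul hH))
  obtain ⟨u, hu, hgu⟩ := (convex_halfSpace_im_gt 0).isPreconnected.intermediate_value hu₂ hu₁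
    hgcont ⟨hg₂.le, hg₁.le⟩
  exact ⟨u, hu, (mul_eq_zero.mp hgu).resolve_left hγ⟩

end

open Polynomial in
theorem Polynomial.exists_im_pos_linear_combination_aeval_eq_zero {P Q : ℝ[X]} (hP : X ^ 2 ∣ P)
    (hQ : Q.eval 0 ≠ 0) :
    ∃ u : ℂ, 0 < u.im ∧
      ∃ lam mu : ℝ, ¬(lam = 0 ∧ mu = 0) ∧ lam * aeval u P + mu * aeval u Q = 0 := by
  by_cases hP0 : P = 0
  · exact ⟨Complex.I, by simp, 1, 0, by simp, by simp [hP0]⟩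
  by_cases hQH : ∃ u : ℂ, 0 < u.im ∧ aeval u Q = 0
  · obtain ⟨u, hu, hQu⟩ := hQH
    exact ⟨u, hu, 0, 1, by simp, by simp [hQu]⟩
  push Not at hQH
  obtain ⟨R, hPR, hR⟩ := P.exists_eq_pow_rootMultiplicity_mul_and_not_dvd hP0 0
  have hm : 2 ≤ rootMultiplicity 0 P := (le_rootMultiplicity_iff hP0).2 (by simpa using hP)
  have hR0 : R.eval 0 ≠ 0 := by rwa [dvd_iff_isRoot] at hR
  have aeval_zero_eq (F : ℝ[X]) : aeval (0 : ℂ) F = F.eval 0 := by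
    rw [← coeff_zero_eq_aeval_zero', coeff_zero_eq_eval_zero]; rfl
  obtain ⟨u, hu, him⟩ := exists_im_pos_im_pow_mul_eq_zero (h := fun u => aeval u R / aeval u Q)
    hm (div_ne_zero hR0 hQ) (by simp [aeval_zero_eq])
    (R.continuous_aeval.continuousAt.div Q.continuous_aeval.continuousAt
      (by simpa [aeval_zero_eq] using hQ))
    (R.continuous_aeval.continuousOn.div Q.continuous_aeval.continuousOn hQH)
  set r := (aeval u P / aeval u Q).re
  have hr : aeval u P / aeval u Q = r := by
    refine Complex.ext rfl ?_
    rw [hPR, map_mul, mul_div_assoc]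
    simpa using him
  refine ⟨u, hu, 1, -r, by simp, ?_⟩
  rw [(div_eq_iff (hQH u hu)).mp hr]
  push_cast
  ring

noncomputable def perpLine (w : Fin 2 → ℝ) : Fin 2 → Polynomial ℝ :=
  ![Polynomial.C (w 0) - Polynomial.C (w 1) * Polynomial.X,
    Polynomial.C (w 1) + Polynomial.C (w 0) * Polynomial.X]

@[simp]
theorem perpLine_eval_zero (w : Fin 2 → ℝ) (i : Fin 2) : (perpLine w i).eval 0 = w i := by
  fin_cases i <;> simp [perpLine]

theorem IsRealProjPoint2.im_mul_conj_eq_zero {z : Fin 2 → ℂ} (hz : IsRealProjPoint2 z) :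
    (z 0 * (starRingEnd ℂ) (z 1)).im = 0 := by
  obtain ⟨w, c, -, rfl⟩ := hz
  simp [Complex.mul_im, Complex.mul_re]
  ring

theorem aeval_perpLine_ne_zero_and_not_isRealProjPoint2 {w : Fin 2 → ℝ} (hw : w ≠ 0) {u : ℂ}
    (hu : u.im ≠ 0) :
    (fun i => Polynomial.aeval u (perpLine w i)) ≠ 0 ∧
      ¬IsRealProjPoint2 (fun i => Polynomial.aeval u (perpLine w i)) := by
  set z := fun i => Polynomial.aeval u (perpLine w i)
  have hw2 : 0 < w 0 ^ 2 + w 1 ^ 2 := by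
    have : w 0 ≠ 0 ∨ w 1 ≠ 0 := by
      contrapose! hw
      ext i; fin_cases i <;> simp [hw]
    rcases this with h | h <;> positivity
  have key : (z 0 * (starRingEnd ℂ) (z 1)).im = -(w 0 ^ 2 + w 1 ^ 2) * u.im := by
    simp [z, perpLine, Complex.mul_im, Complex.mul_re]
    ring
  have hkey : (z 0 * (starRingEnd ℂ) (z 1)).im ≠ 0 := by
    rw [key]; exact mul_ne_zero (neg_ne_zero.mpr hw2.ne') hu
  exact ⟨fun h => hkey (by simp [h]), fun h => hkey h.im_mul_conj_eq_zero⟩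

theorem stmt_11_general (n : ℕ) (p q : MvPolynomial (Fin 2) ℝ)
    (hph : p.IsHomogeneous n) (hqh : q.IsHomogeneous n)
    (hnc : ∀ z : Fin 2 → ℂ, z ≠ 0 →
      ¬ (eval z (map (algebraMap ℝ ℂ) p) = 0 ∧ eval z (map (algebraMap ℝ ℂ) q) = 0))
    (hreal : ∀ lam mu : ℝ, ¬ (lam = 0 ∧ mu = 0) →
      ∀ z : Fin 2 → ℂ, z ≠ 0 →
        eval z (map (algebraMap ℝ ℂ) (lam • p + mu • q)) = 0 → IsRealProjPoint2 z) :
    Squarefree (map (algebraMap ℝ ℂ) p) := by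
  simp only [eval_map_algebraMap] at hnc hreal
  by_contra hsf
  obtain ⟨d, hdp, z, hz, hdz⟩ := exists_mul_self_dvd_aeval_eq_zero_of_not_squarefree hsf
  have hpz : aeval z p = 0 := by
    obtain ⟨e, he⟩ := (dvd_mul_right d d).trans hdp
    rw [← aeval_map_algebraMap ℂ, he, map_mul, hdz, zero_mul]
  obtain ⟨w, c, hc, rfl⟩ := hreal 1 0 (by simp) z hz (by simpa using hpz)
  have hw : w ≠ 0 := by
    rintro rfl
    exact hz (by ext; simp)
  have hqw : aeval w q ≠ 0 := fun hqw => hnc _ hz ⟨hpz, by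
    rw [hqh.aeval_smul, show (fun i => (w i : ℂ)) = algebraMap ℝ ℂ ∘ w from rfl,
      aeval_algebraMap_apply, hqw, map_zero, mul_zero]⟩
  have hP : Polynomial.X ^ 2 ∣ aeval (perpLine w) p :=
    X_sq_dvd_aeval_of_mul_self_dvd_map hph hdp hc (by convert hdz using 3; ext i; simp)
  have hQ : (aeval (perpLine w) q).eval 0 ≠ 0 := by
    rw [← Polynomial.coe_aeval_eq_eval, polynomial_aeval_aeval]
    simpa using hqw
  obtain ⟨u, hu, lam, mu, hlm, hzero⟩ :=
    Polynomial.exists_im_pos_linear_combination_aeval_eq_zero hP hQ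
  obtain ⟨hne, hnr⟩ := aeval_perpLine_ne_zero_and_not_isRealProjPoint2 hw hu.ne'
  refine hnr (hreal lam mu hlm _ hne ?_)
  rw [map_add, map_smul, map_smul, ← polynomial_aeval_aeval, ← polynomial_aeval_aeval,
    Complex.real_smul, Complex.real_smul, hzero]

/-- Let `p, q` be real binary forms of the same degree `n ≥ 1` with no common
projective zero, such that for every `(λ : μ) ∈ ℙ¹(ℝ)` all projective zeros of
`λp + μq` are real.  Then all zeros of `p` are simple, i.e. `p` is squarefree as a
complex binary form (equivalently, the derivative of `p/q` is nonzero at every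
zero of `p`). -/
theorem stmt_11 (n : ℕ) (hn : 0 < n) (p q : MvPolynomial (Fin 2) ℝ)
    (hph : p.IsHomogeneous n) (hqh : q.IsHomogeneous n)
    (hnc : ∀ z : Fin 2 → ℂ, z ≠ 0 →
      ¬ (eval z (map (algebraMap ℝ ℂ) p) = 0 ∧ eval z (map (algebraMap ℝ ℂ) q) = 0))
    (hreal : ∀ lam mu : ℝ, ¬ (lam = 0 ∧ mu = 0) →
      ∀ z : Fin 2 → ℂ, z ≠ 0 →
        eval z (map (algebraMap ℝ ℂ) (lam • p + mu • q)) = 0 → IsRealProjPoint2 z) :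
    Squarefree (map (algebraMap ℝ ℂ) p) :=
  stmt_11_general n p q hph hqh hnc hreal
end
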